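/- If a play π satisfies the fixed window mean-payoff objective FWMP(ℓ) for some window length ℓ ≥ 1, then the mean payoff of π is nonnegative, i.e., liminf_{n→∞} (1/n) Σ_{k=0}^{n-1} w(v_k, v_{k+1}) ≥ 0. -/
import Mathlib


/-- Total payoff of the window of length `j` starting at position `i` of play `π`. -/
def TP {V : Type*} (w : V → V → ℝ) (π : ℕ → V) (i j : ℕ) : ℝ :=
  ∑ k ∈ Finset.range j, w (π (i + k)) (π (i + k + 1))

/-- The fixed window mean-payoff objective with window length `ℓ`. -/
def FWMP {V : Type*} (w : V → V → ℝ) (ℓ : ℕ) (π : ℕ → V) : Prop :=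
  ∃ K, ∀ i ≥ K, ∃ j, 1 ≤ j ∧ j ≤ ℓ ∧ 0 ≤ TP w π i j

private lemma TP_add {V : Type*} (w : V → V → ℝ) (π : ℕ → V) (i a b : ℕ) :
    TP w π i (a + b) = TP w π i a + TP w π (i + a) b := by
  simp [TP, Finset.sum_range_add, add_assoc]

private lemma TP_abs_le {V : Type*} (w : V → V → ℝ) (π : ℕ → V) (W : ℝ)
    (hW : ∀ k, |w (π k) (π (k + 1))| ≤ W) (i j : ℕ) :
    |TP w π i j| ≤ j * W := by
  calc |TP w π i j| ≤ ∑ k ∈ Finset.range j, |w (π (i + k)) (π (i + k + 1))| :=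
        Finset.abs_sum_le_sum_abs _ _
    _ ≤ ∑ _k ∈ Finset.range j, W := Finset.sum_le_sum fun k _ => hW _
    _ = j * W := by simp [mul_comm]

private def seqT (g : ℕ → ℕ) (K : ℕ) : ℕ → ℕ
  | 0 => K
  | m + 1 => seqT g K m + g (seqT g K m)

theorem stmt_3 {V : Type*} (w : V → V → ℝ) (π : ℕ → V) (ℓ : ℕ) (hℓ : 1 ≤ ℓ)
    (W : ℝ) (hW : ∀ k, |w (π k) (π (k + 1))| ≤ W)
    (h : FWMP w ℓ π) :
    0 ≤ Filter.liminf
      (fun n : ℕ => (∑ k ∈ Finset.range n, w (π k) (π (k + 1))) / (n : ℝ))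
      Filter.atTop := by
  classical
  have hW0 : 0 ≤ W := le_trans (abs_nonneg _) (hW 0)
  obtain ⟨K, hK⟩ := h
  -- choice of good windows
  have hch : ∀ i : ℕ, ∃ j, (i ≥ K → (1 ≤ j ∧ j ≤ ℓ ∧ 0 ≤ TP w π i j)) := by
    intro i
    by_cases hi : i ≥ K
    · obtain ⟨j, hj⟩ := hK i hi
      exact ⟨j, fun _ => hj⟩
    · exact ⟨1, fun hi' => absurd hi' hi⟩
  choose g hg using hch
  set t := seqT g K with ht
  have ht0 : t 0 = K := rfl
  have htsucc : ∀ m, t (m + 1) = t m + g (t m) := fun m => rfl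
  have htK : ∀ m, K ≤ t m := by
    intro m
    induction m with
    | zero => exact le_refl K
    | succ m ih => rw [htsucc]; omega
  have hg1 : ∀ m, 1 ≤ g (t m) := fun m => (hg (t m) (htK m)).1
  have hgℓ : ∀ m, g (t m) ≤ ℓ := fun m => (hg (t m) (htK m)).2.1
  have hgTP : ∀ m, 0 ≤ TP w π (t m) (g (t m)) := fun m => (hg (t m) (htK m)).2.2
  -- t grows at least linearly
  have htgrow : ∀ m, K + m ≤ t m := by
    intro m
    induction m with
    | zero => simp [ht0]
    | succ m ih => have := hg1 m; rw [htsucc]; omega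
  -- prefix sums: S n = TP w π 0 n
  set S : ℕ → ℝ := fun n => TP w π 0 n with hS
  have hSeq : ∀ n, (∑ k ∈ Finset.range n, w (π k) (π (k + 1))) = S n := by
    intro n; simp [hS, TP]
  -- S (t m) ≥ S K
  have hStm : ∀ m, S K ≤ S (t m) := by
    intro m
    induction m with
    | zero => exact le_refl _
    | succ m ih =>
      have : S (t (m + 1)) = S (t m) + TP w π (t m) (g (t m)) := by
        rw [htsucc]
        have := TP_add w π 0 (t m) (g (t m))
        simpa [hS] using this
      rw [this]
      have := hgTP m
      linarith
  -- lower bound for S n for n ≥ K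
  have hmain : ∀ n, K ≤ n → S K - ℓ * W ≤ S n := by
    intro n hn
    -- find m with t m ≤ n < t (m+1)
    have hex : ∃ m, n < t m := ⟨n + 1, by have := htgrow (n + 1); omega⟩
    have hMspec : n < t (Nat.find hex) := Nat.find_spec hex
    have hMpos : Nat.find hex ≠ 0 := by
      intro h0
      rw [h0, ht0] at hMspec; omega
    obtain ⟨m, hm⟩ := Nat.exists_eq_succ_of_ne_zero hMpos
    rw [hm, Nat.succ_eq_add_one] at hMspec
    have hsuc := htsucc m
    have htmle : t m ≤ n := by
      by_contra hcon
      have hlt : m < Nat.find hex := by omega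
      exact Nat.find_min hex hlt (by omega)
    have hsplit : S n = S (t m) + TP w π (t m) (n - t m) := by
      have h1 : t m + (n - t m) = n := by omega
      have := TP_add w π 0 (t m) (n - t m)
      rw [h1] at this
      simpa [hS] using this
    have hlen : (n - t m) ≤ ℓ := by
      have h3 := hgℓ m
      omega
    have habs := TP_abs_le w π W hW (t m) (n - t m)
    have hlb : -(ℓ * W) ≤ TP w π (t m) (n - t m) := by
      have h4 : ((n - t m : ℕ) : ℝ) * W ≤ (ℓ : ℝ) * W := by
        apply mul_le_mul_of_nonneg_right _ hW0
        exact_mod_cast hlen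
      have h5 := neg_abs_le (TP w π (t m) (n - t m))
      have h6 := abs_le.mp habs
      linarith [h6.1]
    have := hStm m
    rw [hsplit]
    linarith
  -- now the liminf argument
  set c : ℝ := S K - ℓ * W with hc
  set f : ℕ → ℝ := fun n : ℕ =>
    (∑ k ∈ Finset.range n, w (π k) (π (k + 1))) / (n : ℝ) with hf
  have hev : ∀ᶠ n : ℕ in Filter.atTop, c / (n : ℝ) ≤ f n := by
    filter_upwards [Filter.eventually_ge_atTop (max K 1)] with n hn
    have hn1 : 1 ≤ n := le_trans (le_max_right _ _) hn
    have hnK : K ≤ n := le_trans (le_max_left _ _) hn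
    have hnpos : (0 : ℝ) < (n : ℝ) := by exact_mod_cast hn1
    have := hmain n hnK
    rw [hf]
    simp only [hSeq]
    exact div_le_div_of_nonneg_right this hnpos.le
  have htend : Filter.Tendsto (fun n : ℕ => c / (n : ℝ)) Filter.atTop (nhds 0) :=
    tendsto_const_div_atTop_nhds_zero_nat c
  have hliminfg : Filter.liminf (fun n : ℕ => c / (n : ℝ)) Filter.atTop = 0 :=
    htend.liminf_eq
  have hub : ∀ᶠ n : ℕ in Filter.atTop, -|c| ≤ f n := by
    filter_upwards [hev, Filter.eventually_ge_atTop 1] with n hn hn1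
    have hnpos : (0 : ℝ) < (n : ℝ) := by exact_mod_cast hn1
    have hn1' : (1 : ℝ) ≤ (n : ℝ) := by exact_mod_cast hn1
    have h1 : |c / (n : ℝ)| ≤ |c| := by
      rw [abs_div]
      rw [abs_of_pos hnpos]
      calc |c| / (n : ℝ) ≤ |c| / 1 := by
            apply div_le_div_of_nonneg_left (abs_nonneg c) one_pos hn1'
        _ = |c| := div_one _
    have := neg_abs_le (c / (n : ℝ))
    linarith [abs_le.mp h1]
  have hbdd : Filter.IsBoundedUnder (· ≥ ·) Filter.atTop f :=
    ⟨-|c|, by simpa [Filter.eventually_map] using hub⟩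
  have hub2 : ∀ᶠ n : ℕ in Filter.atTop, f n ≤ W := by
    filter_upwards [Filter.eventually_ge_atTop 1] with n hn1
    have hnpos : (0 : ℝ) < (n : ℝ) := by exact_mod_cast hn1
    have habs := TP_abs_le w π W hW 0 n
    have h6 := (abs_le.mp habs).2
    rw [hf]
    simp only [hSeq, hS]
    rw [div_le_iff₀ hnpos]
    calc TP w π 0 n ≤ (n : ℝ) * W := h6
      _ = W * (n : ℝ) := mul_comm _ _
  have hcobdd : Filter.IsCoboundedUnder (· ≥ ·) Filter.atTop f :=
    Filter.IsBoundedUnder.isCoboundedUnder_ge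
      ⟨W, by simpa [Filter.eventually_map] using hub2⟩
  have hbdd2 : Filter.IsBoundedUnder (· ≥ ·) Filter.atTop
      (fun n : ℕ => c / (n : ℝ)) := htend.isBoundedUnder_ge
  have := Filter.liminf_le_liminf hev hbdd2 hcobdd
  rw [hliminfg] at this
  exact this
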